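/- arXiv:2203.05153 — 9 statements merged into one kernel-verified Lean document; each statement's English description precedes it below -/
import Mathlib

section
/- Knowledge gain (Goubault–Ledent–Rajsbaum): if f : M → M' is a morphism between simplicial models, then for every facet X of M and every positive epistemic formula φ in L_K^+, if M', f(X) ⊨ φ then M, X ⊨ φ. -/
/-- A simplicial model: a pure chromatic simplicial complex, colored by the
agents in `Agent`, whose vertices are labeled by sets of atomic propositions.
Each atomic proposition belongs to an agent (`agentOf`), and the label of a
vertex only contains atoms of the color of that vertex. -/
structure SimplicialModel (Agent Atom Vertex : Type) [Fintype Agent]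
    [DecidableEq Vertex] where
  simplices : Set (Finset Vertex)
  chi : Vertex → Agent
  label : Vertex → Set Atom
  agentOf : Atom → Agent
  simplex_nonempty : ∀ X ∈ simplices, X.Nonempty
  down_closed : ∀ X ∈ simplices, ∀ Y : Finset Vertex, Y ⊆ X → Y.Nonempty → Y ∈ simplices
  chi_injOn : ∀ X ∈ simplices, Set.InjOn chi ↑X
  pure : ∀ X ∈ simplices, ∃ F ∈ simplices, X ⊆ F ∧ F.card = Fintype.card Agent
  label_agent : ∀ v, ∀ p ∈ label v, agentOf p = chi v

namespace SimplicialModel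

variable {Agent Atom Vertex Vertex' : Type} [Fintype Agent]
  [DecidableEq Vertex] [DecidableEq Vertex']

/-- The facets (maximal simplices) of a simplicial model: the simplices with
exactly `|Agent|` vertices. -/
def facets (M : SimplicialModel Agent Atom Vertex) : Set (Finset Vertex) :=
  {X ∈ M.simplices | X.card = Fintype.card Agent}

/-- The type of facets of a simplicial model. -/
def Facet (M : SimplicialModel Agent Atom Vertex) : Type := {X : Finset Vertex // X ∈ M.facets}

/-- The labeling of a facet: union of the labels of its vertices. -/
def flabel (M : SimplicialModel Agent Atom Vertex) (X : M.Facet) : Set Atom :=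
  ⋃ v ∈ (X.1 : Finset Vertex), M.label v

/-- `χ(X ∩ Y)`: the set of colors of the common vertices of two facets. -/
def chiInter (M : SimplicialModel Agent Atom Vertex) (X Y : M.Facet) : Set Agent :=
  M.chi '' ↑(X.1 ∩ Y.1)

/-- The indistinguishability relation `X ∼ₐ Y` : `a ∈ χ(X ∩ Y)`. -/
def indist (M : SimplicialModel Agent Atom Vertex) (a : Agent) (X Y : M.Facet) : Prop :=
  a ∈ M.chiInter X Y

/-- A morphism of simplicial models: maps simplices to simplices, preserves
colors and preserves labels. -/
def IsMorphism (M : SimplicialModel Agent Atom Vertex) (M' : SimplicialModel Agent Atom Vertex')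
    (f : Vertex → Vertex') : Prop :=
  (∀ X ∈ M.simplices, X.image f ∈ M'.simplices) ∧
  (∀ v, M'.chi (f v) = M.chi v) ∧
  (∀ v, M'.label (f v) = M.label v)

/-- Smart constructor for a simplicial model: the complex generated by a given
set of facets, each of which has `|Agent|` vertices with pairwise distinct colors. -/
def ofFacets [Nonempty Agent] (Fs : Set (Finset Vertex)) (chi : Vertex → Agent)
    (label : Vertex → Set Atom) (agentOf : Atom → Agent)
    (hcard : ∀ F ∈ Fs, F.card = Fintype.card Agent)
    (hinj : ∀ F ∈ Fs, Set.InjOn chi ↑F)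
    (hlab : ∀ v, ∀ p ∈ label v, agentOf p = chi v) :
    SimplicialModel Agent Atom Vertex where
  simplices := {X | X.Nonempty ∧ ∃ F ∈ Fs, X ⊆ F}
  chi := chi
  label := label
  agentOf := agentOf
  simplex_nonempty := fun _ hX => hX.1
  down_closed := by
    rintro X ⟨-, F, hF, hXF⟩ Y hYX hY
    exact ⟨hY, F, hF, hYX.trans hXF⟩
  chi_injOn := by
    rintro X ⟨-, F, hF, hXF⟩
    exact (hinj F hF).mono (Finset.coe_subset.mpr hXF)
  pure := by
    rintro X ⟨-, F, hF, hXF⟩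
    refine ⟨F, ⟨?_, F, hF, subset_rfl⟩, hXF, hcard F hF⟩
    rw [← Finset.card_pos, hcard F hF]
    exact Fintype.card_pos
  label_agent := hlab

end SimplicialModel

/-- The language `L_K⁺` of positive epistemic formulas:
`φ ::= p | ¬p | φ ∨ φ | φ ∧ φ | K_a φ`. -/
inductive PosFormula (Agent Atom : Type) : Type where
  | atom : Atom → PosFormula Agent Atom
  | natom : Atom → PosFormula Agent Atom
  | or : PosFormula Agent Atom → PosFormula Agent Atom → PosFormula Agent Atom
  | and : PosFormula Agent Atom → PosFormula Agent Atom → PosFormula Agent Atom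
  | know : Agent → PosFormula Agent Atom → PosFormula Agent Atom

/-- The language `L_D⁺` of positive epistemic formulas with distributed knowledge:
`φ ::= p | ¬p | φ ∨ φ | φ ∧ φ | D_A φ`. -/
inductive PosFormulaD (Agent Atom : Type) : Type where
  | atom : Atom → PosFormulaD Agent Atom
  | natom : Atom → PosFormulaD Agent Atom
  | or : PosFormulaD Agent Atom → PosFormulaD Agent Atom → PosFormulaD Agent Atom
  | and : PosFormulaD Agent Atom → PosFormulaD Agent Atom → PosFormulaD Agent Atom
  | dknow : Set Agent → PosFormulaD Agent Atom → PosFormulaD Agent Atom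

namespace SimplicialModel

variable {Agent Atom Vertex Vertex' : Type} [Fintype Agent]
  [DecidableEq Vertex] [DecidableEq Vertex']

/-- Truth of a positive formula of `L_K⁺` at a facet of a simplicial model. -/
def satK (M : SimplicialModel Agent Atom Vertex) :
    PosFormula Agent Atom → M.Facet → Prop
  | .atom p, X => p ∈ M.flabel X
  | .natom p, X => p ∉ M.flabel X
  | .or φ ψ, X => M.satK φ X ∨ M.satK ψ X
  | .and φ ψ, X => M.satK φ X ∧ M.satK ψ X
  | .know a φ, X => ∀ Y : M.Facet, M.indist a X Y → M.satK φ Y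

/-- Truth of a positive formula of `L_D⁺` at a facet of a simplicial model. -/
def satD (M : SimplicialModel Agent Atom Vertex) :
    PosFormulaD Agent Atom → M.Facet → Prop
  | .atom p, X => p ∈ M.flabel X
  | .natom p, X => p ∉ M.flabel X
  | .or φ ψ, X => M.satD φ X ∨ M.satD ψ X
  | .and φ ψ, X => M.satD φ X ∧ M.satD ψ X
  | .dknow A φ, X => ∀ Y : M.Facet, A ⊆ M.chiInter X Y → M.satD φ Y

/-- A K-simulation of `M` by `M'`: (Atom) related facets have the same labels;
(Forth) if `X R X'` and `X ∼ₐ Y` then there is `Y'` with `Y R Y'` and `X' ∼ₐ Y'`. -/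
def IsKSimulation (M : SimplicialModel Agent Atom Vertex) (M' : SimplicialModel Agent Atom Vertex')
    (R : M.Facet → M'.Facet → Prop) : Prop :=
  (∀ X X', R X X' → M.flabel X = M'.flabel X') ∧
  (∀ (a : Agent) X Y X', R X X' → M.indist a X Y →
    ∃ Y', R Y Y' ∧ M'.indist a X' Y')

/-- A D-simulation of `M` by `M'`: (Atom) related facets have the same labels;
(D-Forth) if `X R X'` then for every facet `Y` there is `Y'` with `Y R Y'` and
`χ(X ∩ Y) ⊆ χ'(X' ∩ Y')`. -/
def IsDSimulation (M : SimplicialModel Agent Atom Vertex) (M' : SimplicialModel Agent Atom Vertex')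
    (R : M.Facet → M'.Facet → Prop) : Prop :=
  (∀ X X', R X X' → M.flabel X = M'.flabel X') ∧
  (∀ X X', R X X' → ∀ Y, ∃ Y', R Y Y' ∧ M.chiInter X Y ⊆ M'.chiInter X' Y')

/-- A relation on facets is total if every facet of `M` is related to some facet of `M'`. -/
def TotalRel (M : SimplicialModel Agent Atom Vertex) (M' : SimplicialModel Agent Atom Vertex')
    (R : M.Facet → M'.Facet → Prop) : Prop :=
  ∀ X, ∃ X', R X X'

end SimplicialModel

/-! Along the graph `X ↦ f(X)` of a morphism, labels of facets are preserved and an `a`-colored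
vertex shared by `X` and `Y` maps to one shared by `f(X)` and `f(Y)`; so the graph is a
K-simulation. Positive formulas transfer backwards along any simulation: the only modal
clause, `K_a`, needs just the forth condition, and the absence of negated modalities means
no back condition is ever required. -/

namespace SimplicialModel

variable {Agent Atom Vertex Vertex' : Type} [Fintype Agent]
  [DecidableEq Vertex] [DecidableEq Vertex']
  {M : SimplicialModel Agent Atom Vertex} {M' : SimplicialModel Agent Atom Vertex'}

theorem satK_of_isKSimulation {R : M.Facet → M'.Facet → Prop} (hR : IsKSimulation M M' R)
    (φ : PosFormula Agent Atom) {X : M.Facet} {X' : M'.Facet} (hXX' : R X X') :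
    M'.satK φ X' → M.satK φ X := by
  induction φ generalizing X X' with
  | atom p | natom p => simp only [satK, hR.1 X X' hXX', imp_self]
  | or φ ψ ihφ ihψ => exact Or.imp (ihφ hXX') (ihψ hXX')
  | and φ ψ ihφ ihψ => exact And.imp (ihφ hXX') (ihψ hXX')
  | know a φ ih =>
    intro hX' Y hXY
    obtain ⟨Y', hYY', hX'Y'⟩ := hR.2 a X Y X' hXX' hXY
    exact ih hYY' (hX' Y' hX'Y')

namespace IsMorphism

variable {f : Vertex → Vertex'}

theorem injOn (hf : IsMorphism M M' f) {X : Finset Vertex} (hX : X ∈ M.simplices) :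
    Set.InjOn f X := by
  intro u hu v hv huv
  apply M.chi_injOn X hX hu hv
  rw [← hf.2.1 u, ← hf.2.1 v, huv]

theorem image_mem_facets (hf : IsMorphism M M' f) {X : Finset Vertex} (hX : X ∈ M.facets) :
    X.image f ∈ M'.facets :=
  ⟨hf.1 X hX.1, (Finset.card_image_of_injOn (hf.injOn hX.1)).trans hX.2⟩

def mapFacet (hf : IsMorphism M M' f) (X : M.Facet) : M'.Facet :=
  ⟨X.1.image f, hf.image_mem_facets X.2⟩

theorem flabel_eq (hf : IsMorphism M M' f) {X : M.Facet} {X' : M'.Facet}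
    (hXX' : X'.1 = X.1.image f) :
    M.flabel X = M'.flabel X' := by
  simp only [flabel, hXX', Finset.set_biUnion_finset_image, hf.2.2]

theorem indist_image (hf : IsMorphism M M' f) {a : Agent} {X Y : M.Facet} {X' Y' : M'.Facet}
    (hXX' : X'.1 = X.1.image f) (hYY' : Y'.1 = Y.1.image f) (hXY : M.indist a X Y) :
    M'.indist a X' Y' := by
  obtain ⟨v, hv, rfl⟩ := hXY
  rw [Finset.coe_inter, Set.mem_inter_iff] at hv
  refine ⟨f v, ?_, hf.2.1 v⟩
  rw [Finset.coe_inter, hXX', hYY']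
  exact ⟨Finset.mem_image_of_mem f hv.1, Finset.mem_image_of_mem f hv.2⟩

theorem isKSimulation (hf : IsMorphism M M' f) :
    IsKSimulation M M' fun X X' => X'.1 = X.1.image f :=
  ⟨fun _ _ => hf.flabel_eq, fun _ _ Y _ hXX' hXY =>
    ⟨hf.mapFacet Y, rfl, hf.indist_image hXX' rfl hXY⟩⟩

end IsMorphism

end SimplicialModel

theorem knowledge_gain_general
    {Agent Atom Vertex Vertex' : Type} [Fintype Agent]
    [DecidableEq Vertex] [DecidableEq Vertex']
    (M : SimplicialModel Agent Atom Vertex) (M' : SimplicialModel Agent Atom Vertex')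
    (f : Vertex → Vertex') (hf : SimplicialModel.IsMorphism M M' f)
    (X : M.Facet) (X' : M'.Facet) (hfX : (X'.1 : Finset Vertex') = X.1.image f)
    (φ : PosFormula Agent Atom) :
    M'.satK φ X' → M.satK φ X :=
  SimplicialModel.satK_of_isKSimulation hf.isKSimulation φ hfX

/-- **Knowledge gain** (Goubault–Ledent–Rajsbaum): if `f : M → M'` is a morphism
between simplicial models, then for every facet `X` of `M` (with image facet
`f(X)` of `M'`) and every positive epistemic formula `φ ∈ L_K⁺`,
`M', f(X) ⊨ φ` implies `M, X ⊨ φ`. -/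
theorem knowledge_gain
    {Agent Atom Vertex Vertex' : Type} [Fintype Agent] [Nonempty Agent]
    [DecidableEq Vertex] [DecidableEq Vertex']
    (M : SimplicialModel Agent Atom Vertex) (M' : SimplicialModel Agent Atom Vertex')
    (f : Vertex → Vertex') (hf : SimplicialModel.IsMorphism M M' f)
    (X : M.Facet) (X' : M'.Facet) (hfX : (X'.1 : Finset Vertex') = X.1.image f)
    (φ : PosFormula Agent Atom) :
    M'.satK φ X' → M.satK φ X :=
  knowledge_gain_general M M' f hf X X' hfX φ
end

section
/- Knowledge gain via simulation: if S ⊆ F(M) × F(M') is a K-simulation of M by M', then for every pair (X, X') ∈ S and every positive formula φ ∈ L_K^+, M', X' ⊨ φ implies M, X ⊨ φ. -/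
/-- **Knowledge gain via simulation**: if `S` is a K-simulation of `M` by `M'`,
then for every pair `(X, X') ∈ S` and every positive formula `φ ∈ L_K⁺`,
`M', X' ⊨ φ` implies `M, X ⊨ φ`. -/
theorem knowledge_gain_via_K_simulation
    {Agent Atom Vertex Vertex' : Type} [Fintype Agent] [Nonempty Agent]
    [DecidableEq Vertex] [DecidableEq Vertex']
    (M : SimplicialModel Agent Atom Vertex) (M' : SimplicialModel Agent Atom Vertex')
    (S : M.Facet → M'.Facet → Prop) (hS : SimplicialModel.IsKSimulation M M' S)
    (X : M.Facet) (X' : M'.Facet) (hXX' : S X X')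
    (φ : PosFormula Agent Atom) :
    M'.satK φ X' → M.satK φ X := by
  induction φ generalizing X X' with
  | atom p => intro h; rwa [SimplicialModel.satK, hS.1 X X' hXX']
  | natom p => intro h; rwa [SimplicialModel.satK, hS.1 X X' hXX']
  | or φ ψ ihφ ihψ =>
    rintro (h | h)
    · exact Or.inl (ihφ X X' hXX' h)
    · exact Or.inr (ihψ X X' hXX' h)
  | and φ ψ ihφ ihψ =>
    rintro ⟨h1, h2⟩
    exact ⟨ihφ X X' hXX' h1, ihψ X X' hXX' h2⟩
  | know a φ ih =>
    intro h Y hXY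
    obtain ⟨Y', hYY', hX'Y'⟩ := hS.2 a X Y X' hXX' hXY
    exact ih Y Y' hYY' (h Y' hX'Y')
end

section
/- Let I be a facet of the input simplicial model and γ_1, γ_2, …, γ_r ordered partitions of Π with γ_1 = (C_1, …, C_l). Then for every r ≥ 1 and every agent a ∈ Π: {(p, i_p) ∈ I : p ∈ C_1} ⊆ car(view^r_a(I, γ_1, …, γ_r)) ⊆ I. -/
/-- An ordered partition of the set of agents: a sequence
`∅ ≠ C₁ ⊊ C₂ ⊊ ⋯ ⊊ C_l = Π`. -/
structure OrderedPartition (Agent : Type) [Fintype Agent] [DecidableEq Agent] where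
  parts : List (Finset Agent)
  ne : parts ≠ []
  head_nonempty : (parts.head ne).Nonempty
  chain : parts.Chain' (· ⊂ ·)
  last_univ : parts.getLast ne = Finset.univ

namespace OrderedPartition

variable {Agent : Type} [Fintype Agent] [DecidableEq Agent]

/-- `C_{min {j : a ∈ C_j}}`: the first component of the ordered partition
containing the agent `a` (it exists since the last component is `Π`). -/
def myPart (γ : OrderedPartition Agent) (a : Agent) : Finset Agent :=
  (γ.parts.find? (fun C => decide (a ∈ C))).getD Finset.univ

end OrderedPartition

/-- `Views r`: the possible views after communicating `r` times.
`Views 0 = V^in` and `Views (r+1)` consists of sets of pairs of an agent and a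
view in `Views r`. -/
def Views (Agent Value : Type) : ℕ → Type
  | 0 => Value
  | r + 1 => Set (Agent × Views Agent Value r)

/-- `view^r_a(I, γ₁, …, γ_r)`: the view of agent `a` after `r` rounds of
immediate snapshot from the input facet `I` (given by `i : Agent → Value`),
scheduled by the ordered partitions `γ₁, …, γ_r`. -/
def view {Agent Value : Type} [Fintype Agent] [DecidableEq Agent] (i : Agent → Value) :
    (r : ℕ) → (Fin r → OrderedPartition Agent) → Agent → Views Agent Value r
  | 0, _, a => i a
  | r + 1, γ, a =>
      {x | ∃ p ∈ (γ (Fin.last r)).myPart a,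
        x = (p, view i r (fun j => γ j.castSucc) p)}

/-- The flattening map `car : Views^{r+1} → Views^1`:
`car(w) = w` for `w ∈ Views^1`, and `car(w) = ⋃_{(p,v) ∈ w} car(v)` otherwise. -/
def car {Agent Value : Type} : (r : ℕ) → Views Agent Value (r + 1) → Set (Agent × Value)
  | 0, w => w
  | r + 1, w => {q | ∃ x ∈ (show Set (Agent × Views Agent Value (r + 1)) from w),
      q ∈ car r x.2}

/-
The view of `a` after `r + 1` rounds contains `a`'s own view after `r` rounds, since `a`
lies in its own part; iterating down to the first round, `car` of it contains every
`(p, i p)` with `p` in the part of `a` in `γ₁`, which contains `C₁` because the parts form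
an increasing chain. Conversely, flattening a view only ever reaches round-zero views
`(p, i p)`.
-/

namespace OrderedPartition

variable {Agent : Type} [Fintype Agent] [DecidableEq Agent] (γ : OrderedPartition Agent)

lemma myPart_mem_parts_and_mem (a : Agent) : γ.myPart a ∈ γ.parts ∧ a ∈ γ.myPart a := by
  have hsome : (γ.parts.find? (fun C => decide (a ∈ C))).isSome := by
    rw [List.find?_isSome]
    exact ⟨γ.parts.getLast γ.ne, List.getLast_mem γ.ne, by simp [γ.last_univ]⟩
  obtain ⟨C, hC⟩ := Option.isSome_iff_exists.mp hsome
  have ha : a ∈ C := by simpa using List.find?_some hC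
  simp [myPart, hC, List.mem_of_find?_eq_some hC, ha]

lemma mem_myPart (a : Agent) : a ∈ γ.myPart a := (γ.myPart_mem_parts_and_mem a).2

lemma head_subset_of_mem {C : Finset Agent} (hC : C ∈ γ.parts) : γ.parts.head γ.ne ⊆ C := by
  have hpw : γ.parts.Pairwise (· ⊂ ·) := List.isChain_iff_pairwise.mp γ.chain
  rw [← List.cons_head_tail γ.ne] at hpw hC
  rcases List.mem_cons.mp hC with rfl | hC
  · exact subset_rfl
  · exact ((List.pairwise_cons.mp hpw).1 C hC).subset

lemma head_subset_myPart (a : Agent) : γ.parts.head γ.ne ⊆ γ.myPart a :=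
  γ.head_subset_of_mem (γ.myPart_mem_parts_and_mem a).1

end OrderedPartition

section

variable {Agent Value : Type} [Fintype Agent] [DecidableEq Agent] (i : Agent → Value)

lemma self_mem_view_succ (r : ℕ) (γ : Fin (r + 1) → OrderedPartition Agent) (a : Agent) :
    (a, view i r (fun j => γ j.castSucc) a) ∈
      (show Set (Agent × Views Agent Value r) from view i (r + 1) γ a) :=
  ⟨a, (γ (Fin.last r)).mem_myPart a, rfl⟩

lemma car_view_subset_graph (s : ℕ) (γ : Fin (s + 1) → OrderedPartition Agent) (a : Agent) :
    car s (view i (s + 1) γ a) ⊆ {x : Agent × Value | ∃ p : Agent, x = (p, i p)} := by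
  induction s generalizing a with
  | zero =>
    rintro x ⟨p, -, rfl⟩
    exact ⟨p, rfl⟩
  | succ s ih =>
    rintro x ⟨-, ⟨p, -, rfl⟩, hx⟩
    exact ih (fun j => γ j.castSucc) p hx

lemma graph_head_subset_car_view (s : ℕ) (γ : Fin (s + 1) → OrderedPartition Agent)
    (a : Agent) :
    {x : Agent × Value | ∃ p ∈ (γ 0).parts.head (γ 0).ne, x = (p, i p)} ⊆
      car s (view i (s + 1) γ a) := by
  induction s generalizing a with
  | zero =>
    rintro x ⟨p, hp, rfl⟩
    exact ⟨p, (γ 0).head_subset_myPart a hp, rfl⟩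
  | succ s ih =>
    intro x hx
    exact ⟨_, self_mem_view_succ i (s + 1) γ a, ih (fun j => γ j.castSucc) a hx⟩

end

theorem car_view_subset_general
    {Agent Value : Type} [Fintype Agent] [DecidableEq Agent]
    (i : Agent → Value) (s : ℕ) (γ : Fin (s + 1) → OrderedPartition Agent) (a : Agent) :
    {x : Agent × Value | ∃ p ∈ (γ 0).parts.head (γ 0).ne, x = (p, i p)} ⊆
      car s (view i (s + 1) γ a) ∧
    car s (view i (s + 1) γ a) ⊆ {x : Agent × Value | ∃ p : Agent, x = (p, i p)} :=
  ⟨graph_head_subset_car_view i s γ a, car_view_subset_graph i s γ a⟩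

/-- For a facet `I` of the input simplicial model (given by the input assignment
`i : Agent → Value`), ordered partitions `γ₁, …, γ_r` with `γ₁ = (C₁, …, C_l)`,
every `r ≥ 1` (written `r = s + 1`) and every agent `a`:
`{(p, i_p) ∈ I : p ∈ C₁} ⊆ car(view^r_a(I, γ₁, …, γ_r)) ⊆ I`. -/
theorem car_view_subset
    {Agent Value : Type} [Fintype Agent] [DecidableEq Agent] [Nonempty Agent]
    (i : Agent → Value) (s : ℕ) (γ : Fin (s + 1) → OrderedPartition Agent) (a : Agent) :
    {x : Agent × Value | ∃ p ∈ (γ 0).parts.head (γ 0).ne, x = (p, i p)} ⊆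
      car s (view i (s + 1) γ a) ∧
    car s (view i (s + 1) γ a) ⊆ {x : Agent × Value | ∃ p : Agent, x = (p, i p)} :=
  car_view_subset_general i s γ a
end

section
/- For every r ≥ 1 and every k with 2 ≤ k ≤ |Π|, there is no logical obstruction in L_K^+ to the solvability of the k-set agreement task SA_k by the r-iterated immediate snapshot protocol IS^r: for every positive formula φ ∈ L_K^+, if I[SA_k] ⊨ φ then I[IS^r] ⊨ φ (equivalently, there exists a total K-simulation of I[IS^r] by I[SA_k]). -/
attribute [local instance] Classical.decEq

noncomputable section

variable (Agent : Type) [Fintype Agent] [DecidableEq Agent] [Nonempty Agent]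

/-- The facets of the product update `I[SA_k]` of the input model with the
`k`-set agreement task (with `V^in = V^out = Agent`): a vertex `(a, i, d)`
records agent `a`'s input `i` and decision `d`.  A facet is determined by an
input assignment `i` and a decision map `d` with `|d(Π)| ≤ k` whose decided
values all appear among the inputs (the precondition of the task). -/
def SAfacets (k : ℕ) : Set (Finset (Agent × Agent × Agent)) :=
  {X | ∃ i d : Agent → Agent,
    (Finset.univ.image d).card ≤ k ∧ (∀ a : Agent, ∃ b : Agent, i b = d a) ∧
    X = Finset.univ.image (fun a => (a, i a, d a))}

/-- The product update `I[SA_k]` as a simplicial model.  Atomic propositions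
are `ip_a^v ≅ (a, v) : Agent × Agent`; the label of `(a, i, d)` is `{ip_a^i}`. -/
def ISA (k : ℕ) : SimplicialModel Agent (Agent × Agent) (Agent × Agent × Agent) :=
  SimplicialModel.ofFacets (SAfacets Agent k) (fun v => v.1) (fun v => {(v.1, v.2.1)})
    Prod.fst
    (by
      rintro F ⟨i, d, -, -, rfl⟩
      rw [Finset.card_image_of_injective _
        (fun a b h => congrArg Prod.fst h : Function.Injective fun a => (a, i a, d a))]
      exact Finset.card_univ)
    (by
      rintro F ⟨i, d, -, -, rfl⟩ x hx y hy hxy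
      simp only [Finset.coe_image, Set.mem_image, Finset.mem_coe] at hx hy
      obtain ⟨a, -, rfl⟩ := hx
      obtain ⟨b, -, rfl⟩ := hy
      exact congrArg (fun c => (c, i c, d c)) hxy)
    (by
      rintro v p hp
      rw [Set.mem_singleton_iff] at hp
      subst hp
      rfl)

/-- The facets of the product update `I[IS^r]` of the input model with the
`r`-iterated immediate snapshot protocol: a vertex `(a, i, v)` records agent
`a`'s input `i` and its view `v` after `r` rounds; a facet is determined by an
input assignment and a sequence of `r` ordered partitions. -/
def ISfacets (r : ℕ) : Set (Finset (Agent × Agent × Views Agent Agent r)) :=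
  {X | ∃ (i : Agent → Agent) (γ : Fin r → OrderedPartition Agent),
    X = Finset.univ.image (fun a => (a, i a, view i r γ a))}

/-- The product update `I[IS^r]` as a simplicial model. -/
def IIS (r : ℕ) :
    SimplicialModel Agent (Agent × Agent) (Agent × Agent × Views Agent Agent r) :=
  SimplicialModel.ofFacets (ISfacets Agent r) (fun v => v.1) (fun v => {(v.1, v.2.1)})
    Prod.fst
    (by
      rintro F ⟨i, γ, rfl⟩
      rw [Finset.card_image_of_injective _
        (fun a b h => congrArg Prod.fst h :
          Function.Injective fun a => (a, i a, view i r γ a))]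
      exact Finset.card_univ)
    (by
      rintro F ⟨i, γ, rfl⟩ x hx y hy hxy
      simp only [Finset.coe_image, Set.mem_image, Finset.mem_coe] at hx hy
      obtain ⟨a, -, rfl⟩ := hx
      obtain ⟨b, -, rfl⟩ := hy
      exact congrArg (fun c => (c, i c, view i r γ c)) hxy)
    (by
      rintro v p hp
      rw [Set.mem_singleton_iff] at hp
      subst hp
      rfl)

end


section Aux

variable {Agent : Type} [Fintype Agent] [DecidableEq Agent] [Nonempty Agent]

lemma head_subset_of_chain : ∀ (l : List (Finset Agent)) (hl : l ≠ [])
    (_ : l.Chain' (· ⊂ ·)), ∀ C ∈ l, l.head hl ⊆ C := by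
  intro l
  induction l with
  | nil => intro hl; exact absurd rfl hl
  | cons a t ih =>
    intro _ hch C hC
    rcases List.mem_cons.mp hC with rfl | hC
    · exact subset_rfl
    · cases t with
      | nil => simp at hC
      | cons b t' =>
        have hab : a ⊂ b := (List.isChain_cons_cons.mp hch).1
        have := ih (by simp) (List.isChain_cons_cons.mp hch).2 C hC
        exact hab.subset.trans this

lemma head_subset_myPart (γ : OrderedPartition Agent) (a : Agent) :
    γ.parts.head γ.ne ⊆ γ.myPart a := by
  unfold OrderedPartition.myPart
  cases h : γ.parts.find? (fun C => decide (a ∈ C)) with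
  | none => simp
  | some C =>
    simp only [Option.getD_some]
    exact head_subset_of_chain γ.parts γ.ne γ.chain C (List.mem_of_find?_eq_some h)

lemma mem_myPart_self (γ : OrderedPartition Agent) (a : Agent) :
    a ∈ γ.myPart a := by
  unfold OrderedPartition.myPart
  cases h : γ.parts.find? (fun C => decide (a ∈ C)) with
  | none => simp
  | some C =>
    simpa using List.find?_some h

lemma mem_car (i : Agent → Agent) :
    ∀ (r : ℕ) (γ : Fin (r + 1) → OrderedPartition Agent) (a c : Agent),
      c ∈ (γ 0).myPart a → (c, i c) ∈ car r (view i (r + 1) γ a) := by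
  intro r
  induction r with
  | zero =>
    intro γ a c hc
    show ∃ p ∈ (γ (Fin.last 0)).myPart a,
      ((c, i c) : Agent × Agent) = (p, view i 0 (fun j => γ j.castSucc) p)
    exact ⟨c, hc, rfl⟩
  | succ r ih =>
    intro γ a c hc
    show ∃ x ∈ (show Set (Agent × Views Agent Agent (r + 1)) from view i (r + 2) γ a),
      ((c, i c) : Agent × Agent) ∈ car r x.2
    refine ⟨(a, view i (r + 1) (fun j => γ j.castSucc) a),
      ⟨a, mem_myPart_self _ a, rfl⟩, ?_⟩
    exact ih (fun j => γ j.castSucc) a c hc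

lemma car_eq (i : Agent → Agent) :
    ∀ (r : ℕ) (γ : Fin (r + 1) → OrderedPartition Agent) (a p v : Agent),
      ((p, v) : Agent × Agent) ∈ car r (view i (r + 1) γ a) → v = i p := by
  intro r
  induction r with
  | zero =>
    intro γ a p v hv
    obtain ⟨q, -, hq⟩ := hv
    obtain ⟨rfl, rfl⟩ := Prod.mk.injEq .. ▸ hq
    rfl
  | succ r ih =>
    intro γ a p v hv
    obtain ⟨x, hx, hmem⟩ := hv
    obtain ⟨q, -, rfl⟩ := hx
    exact ih (fun j => γ j.castSucc) q p v hmem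

end Aux

section Main

variable {Agent : Type} [Fintype Agent] [DecidableEq Agent] [Nonempty Agent]

/-- satK is preserved backwards along K-simulations. -/
lemma satK_of_sim {Atom V V' : Type} [DecidableEq V] [DecidableEq V']
    {M : SimplicialModel Agent Atom V} {M' : SimplicialModel Agent Atom V'}
    {R : M.Facet → M'.Facet → Prop} (hR : M.IsKSimulation M' R) :
    ∀ (φ : PosFormula Agent Atom) (X : M.Facet) (X' : M'.Facet),
      R X X' → M'.satK φ X' → M.satK φ X := by
  intro φ
  induction φ with
  | atom p =>
    intro X X' h h'
    show p ∈ M.flabel X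
    rw [hR.1 X X' h]; exact h'
  | natom p =>
    intro X X' h h'
    show p ∉ M.flabel X
    rw [hR.1 X X' h]; exact h'
  | or φ ψ ihφ ihψ =>
    intro X X' h h'
    rcases h' with h' | h'
    · exact Or.inl (ihφ X X' h h')
    · exact Or.inr (ihψ X X' h h')
  | and φ ψ ihφ ihψ =>
    intro X X' h h'
    exact ⟨ihφ X X' h h'.1, ihψ X X' h h'.2⟩
  | know a φ ih =>
    intro X X' h h' Y hXY
    obtain ⟨Y', hYY', hind⟩ := hR.2 a X Y X' h hXY
    exact ih Y Y' hYY' (h' Y' hind)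

lemma IIS_facet_rep (r : ℕ) (X : (IIS Agent r).Facet) :
    ∃ (i : Agent → Agent) (γ : Fin r → OrderedPartition Agent),
      X.1 = Finset.univ.image (fun a => (a, i a, view i r γ a)) := by
  obtain ⟨⟨-, F, hF, hsub⟩, hcard⟩ := X.2
  obtain ⟨i, γ, rfl⟩ := hF
  refine ⟨i, γ, Finset.eq_of_subset_of_card_le hsub ?_⟩
  rw [hcard, Finset.card_image_of_injective _
    (fun a b h => congrArg Prod.fst h :
      Function.Injective fun a => (a, i a, view i r γ a))]
  exact le_of_eq Finset.card_univ.symm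

lemma ISA_facet_mk (k : ℕ) (i d : Agent → Agent)
    (hd : (Finset.univ.image d).card ≤ k) (hpre : ∀ a : Agent, ∃ b : Agent, i b = d a) :
    Finset.univ.image (fun a => (a, i a, d a)) ∈ (ISA Agent k).facets := by
  constructor
  · refine ⟨⟨(Classical.arbitrary Agent, _, _), Finset.mem_image_of_mem _ (Finset.mem_univ _)⟩,
      _, ⟨i, d, hd, hpre, rfl⟩, subset_rfl⟩
  · rw [Finset.card_image_of_injective _
      (fun a b h => congrArg Prod.fst h :
        Function.Injective fun a => (a, i a, d a))]
    exact Finset.card_univ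


lemma flabel_image {Atom' V : Type} [DecidableEq V] (M : SimplicialModel Agent Atom' V)
    (f : Agent → V) (g : Agent → Atom') (X : M.Facet)
    (hX : X.1 = Finset.univ.image f) (hl : ∀ a, M.label (f a) = {g a}) :
    M.flabel X = Set.range g := by
  ext q
  simp only [SimplicialModel.flabel, hX, Set.mem_iUnion, Finset.mem_image,
    Finset.mem_univ, true_and, Set.mem_range, Finset.mem_coe, exists_prop]
  constructor
  · rintro ⟨v, ⟨a, rfl⟩, hq⟩
    rw [hl a] at hq
    exact ⟨a, hq.symm⟩
  · rintro ⟨a, rfl⟩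
    exact ⟨f a, ⟨a, rfl⟩, by rw [hl a]; rfl⟩

end Main

/-- For every `r ≥ 1` and every `k` with `2 ≤ k ≤ |Π|`, there is no logical
obstruction in `L_K⁺` to the solvability of the `k`-set agreement task `SA_k`
by the `r`-iterated immediate snapshot protocol `IS^r`: every positive formula
of `L_K⁺` valid in `I[SA_k]` is also valid in `I[IS^r]`. -/
theorem no_obstruction_SAk_ISr
    {Agent : Type} [Fintype Agent] [DecidableEq Agent] [Nonempty Agent]
    (r k : ℕ) (hr : 1 ≤ r) (hk : 2 ≤ k) (hk' : k ≤ Fintype.card Agent)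
    (φ : PosFormula Agent (Agent × Agent)) :
    (∀ X' : (ISA Agent k).Facet, (ISA Agent k).satK φ X') →
    ∀ X : (IIS Agent r).Facet, (IIS Agent r).satK φ X := by
  classical
  obtain ⟨r', rfl⟩ : ∃ r', r = r' + 1 := ⟨r - 1, (Nat.succ_pred_eq_of_pos hr).symm⟩
  intro hvalid X
  let R : (IIS Agent (r' + 1)).Facet → (ISA Agent k).Facet → Prop := fun X X' =>
    ∃ (i : Agent → Agent) (γ : Fin (r' + 1) → OrderedPartition Agent) (d : Agent → Agent),
      X.1 = Finset.univ.image (fun a => (a, i a, view i (r' + 1) γ a)) ∧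
      X'.1 = Finset.univ.image (fun a => (a, i a, d a)) ∧
      ∀ a, ∃ p, ((p, i p) : Agent × Agent) ∈ car r' (view i (r' + 1) γ a) ∧ d a = i p
  -- Atom condition
  have hAtom : ∀ X X', R X X' →
      (IIS Agent (r' + 1)).flabel X = (ISA Agent k).flabel X' := by
    rintro X X' ⟨i, γ, d, hX1, hX'1, -⟩
    rw [flabel_image _ _ (fun a => (a, i a)) X hX1 (fun a => rfl),
      flabel_image _ _ (fun a => (a, i a)) X' hX'1 (fun a => rfl)]
  -- Forth condition
  have hForth : ∀ (a : Agent) X Y X', R X X' → (IIS Agent (r' + 1)).indist a X Y →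
      ∃ Y', R Y Y' ∧ (ISA Agent k).indist a X' Y' := by
    rintro a X Y X' ⟨i, γ, d, hX1, hX'1, hseen⟩ hXY
    obtain ⟨j, δ, hY1⟩ := IIS_facet_rep (Agent := Agent) (r' + 1) Y
    -- extract the common vertex
    obtain ⟨v, hv, hva⟩ := hXY
    rw [Finset.mem_coe, Finset.mem_inter, hX1, hY1] at hv
    obtain ⟨hvX, hvY⟩ := hv
    obtain ⟨b, -, rfl⟩ := Finset.mem_image.mp hvX
    obtain ⟨b', -, hb'⟩ := Finset.mem_image.mp hvY
    have hba : b = a := hva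
    subst hba
    have hb'a : b' = b := congrArg Prod.fst hb'
    subst hb'a
    have hja : j b' = i b' := congrArg (fun x => x.2.1) hb'
    have hvw : view j (r' + 1) δ b' = view i (r' + 1) γ b' :=
      congrArg (fun x => x.2.2) hb'
    -- the seen value for b'
    obtain ⟨p, hp, hdp⟩ := hseen b'
    rw [← hvw] at hp
    have hjp : i p = j p := car_eq j r' δ b' p (i p) hp
    -- a head element of the first round of δ
    obtain ⟨c, hc⟩ := (δ 0).head_nonempty
    set e : Agent → Agent := fun x => if x = b' then d b' else j c with he
    have heb' : e b' = d b' := if_pos rfl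
    have hdjp : d b' = j p := hdp.trans hjp
    have hY'mem : Finset.univ.image (fun x => (x, j x, e x)) ∈ (ISA Agent k).facets := by
      refine ISA_facet_mk k j e ?_ ?_
      · have hsub : Finset.univ.image e ⊆ {d b', j c} := by
          intro x hx
          obtain ⟨y, -, rfl⟩ := Finset.mem_image.mp hx
          by_cases hy : y = b'
          · simp [he, hy]
          · simp [he, hy]
        calc (Finset.univ.image e).card ≤ ({d b', j c} : Finset Agent).card :=
              Finset.card_le_card hsub
          _ ≤ 2 := Finset.card_le_two.trans_eq rfl
          _ ≤ k := hk
      · intro x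
        by_cases hx : x = b'
        · exact ⟨p, by rw [hx, heb', hdjp]⟩
        · exact ⟨c, by simp [he, hx]⟩
    refine ⟨⟨_, hY'mem⟩, ⟨j, δ, e, hY1, rfl, ?_⟩, ?_⟩
    · intro x
      by_cases hx : x = b'
      · subst hx
        exact ⟨p, by rw [← hjp]; exact hp, by rw [heb', hdjp]⟩
      · exact ⟨c, mem_car j r' δ x c (head_subset_myPart (δ 0) x hc), by simp [he, hx]⟩
    · refine ⟨(b', i b', d b'), ?_, rfl⟩
      rw [Finset.mem_coe, Finset.mem_inter, hX'1]
      constructor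
      · exact Finset.mem_image.mpr ⟨b', Finset.mem_univ _, rfl⟩
      · refine Finset.mem_image.mpr ⟨b', Finset.mem_univ _, ?_⟩
        rw [heb', hja]
  -- Totality
  have hTotal : ∀ X, ∃ X', R X X' := by
    intro X
    obtain ⟨i, γ, hX1⟩ := IIS_facet_rep (Agent := Agent) (r' + 1) X
    obtain ⟨c, hc⟩ := (γ 0).head_nonempty
    have hmem : Finset.univ.image (fun a => (a, i a, i c)) ∈ (ISA Agent k).facets := by
      refine ISA_facet_mk k i (fun _ => i c) ?_ (fun _ => ⟨c, rfl⟩)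
      have hsub : Finset.univ.image (fun _ : Agent => i c) ⊆ {i c} := by
        intro x hx
        obtain ⟨y, -, rfl⟩ := Finset.mem_image.mp hx
        exact Finset.mem_singleton_self _
      calc (Finset.univ.image (fun _ : Agent => i c)).card ≤ ({i c} : Finset Agent).card :=
            Finset.card_le_card hsub
        _ ≤ k := by simpa using (by omega : 1 ≤ k)
    exact ⟨⟨_, hmem⟩, i, γ, fun _ => i c, hX1, rfl,
      fun a => ⟨c, mem_car i r' γ a c (head_subset_myPart (γ 0) a hc), rfl⟩⟩
  obtain ⟨X', hXX'⟩ := hTotal X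
  exact satK_of_sim ⟨hAtom, hForth⟩ φ X X' hXX' (hvalid X')
end

section
/- Knowledge gain with distributed knowledge: if f : M → M' is a morphism between simplicial models, then for every facet X of M and every positive formula φ in L_D^+, if M', f(X) ⊨ φ then M, X ⊨ φ. -/
section Aux

variable {Agent Atom Vertex Vertex' : Type} [Fintype Agent]
  [DecidableEq Vertex] [DecidableEq Vertex']
  {M : SimplicialModel Agent Atom Vertex} {M' : SimplicialModel Agent Atom Vertex'}
  {f : Vertex → Vertex'}

lemma injOn_of_facet (hf : SimplicialModel.IsMorphism M M' f)
    (Y : Finset Vertex) (hY : Y ∈ M.simplices) : Set.InjOn f ↑Y := by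
  intro u hu v hv huv
  apply M.chi_injOn Y hY hu hv
  rw [← hf.2.1 u, ← hf.2.1 v, huv]

lemma image_facet (hf : SimplicialModel.IsMorphism M M' f)
    (Y : M.Facet) : Y.1.image f ∈ M'.facets := by
  obtain ⟨hYs, hYc⟩ := Y.2
  refine ⟨hf.1 _ hYs, ?_⟩
  rw [Finset.card_image_of_injOn (injOn_of_facet hf Y.1 hYs), hYc]

lemma flabel_image_s6 (hf : SimplicialModel.IsMorphism M M' f)
    (Y : M.Facet) (Y' : M'.Facet) (h : (Y'.1 : Finset Vertex') = Y.1.image f) :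
    M'.flabel Y' = M.flabel Y := by
  ext p
  simp only [SimplicialModel.flabel, h, Set.mem_iUnion, Finset.mem_image]
  constructor
  · rintro ⟨w, ⟨v, hv, rfl⟩, hp⟩
    exact ⟨v, hv, by rwa [hf.2.2 v] at hp⟩
  · rintro ⟨v, hv, hp⟩
    exact ⟨f v, ⟨v, hv, rfl⟩, by rwa [hf.2.2 v]⟩

lemma chiInter_sub (hf : SimplicialModel.IsMorphism M M' f)
    (X Y : M.Facet) (X' Y' : M'.Facet)
    (hX : (X'.1 : Finset Vertex') = X.1.image f)
    (hY : (Y'.1 : Finset Vertex') = Y.1.image f) :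
    M.chiInter X Y ⊆ M'.chiInter X' Y' := by
  rintro a ⟨v, hv, rfl⟩
  rw [Finset.coe_inter, Set.mem_inter_iff] at hv
  refine ⟨f v, ?_, hf.2.1 v⟩
  rw [Finset.coe_inter, Set.mem_inter_iff, hX, hY]
  exact ⟨Finset.mem_image_of_mem f hv.1, Finset.mem_image_of_mem f hv.2⟩

end Aux

/-- **Knowledge gain with distributed knowledge**: if `f : M → M'` is a morphism
between simplicial models, then for every facet `X` of `M` (with image facet
`f(X)` of `M'`) and every positive formula `φ ∈ L_D⁺`,
`M', f(X) ⊨ φ` implies `M, X ⊨ φ`. -/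
theorem knowledge_gain_distributed
    {Agent Atom Vertex Vertex' : Type} [Fintype Agent] [Nonempty Agent]
    [DecidableEq Vertex] [DecidableEq Vertex']
    (M : SimplicialModel Agent Atom Vertex) (M' : SimplicialModel Agent Atom Vertex')
    (f : Vertex → Vertex') (hf : SimplicialModel.IsMorphism M M' f)
    (X : M.Facet) (X' : M'.Facet) (hfX : (X'.1 : Finset Vertex') = X.1.image f)
    (φ : PosFormulaD Agent Atom) :
    M'.satD φ X' → M.satD φ X := by
  induction φ generalizing X X' with
  | atom p =>
    intro h
    simpa [SimplicialModel.satD, flabel_image_s6 hf X X' hfX] using h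
  | natom p =>
    intro h
    simpa [SimplicialModel.satD, flabel_image_s6 hf X X' hfX] using h
  | or φ ψ ihφ ihψ =>
    rintro (h | h)
    · exact Or.inl (ihφ X X' hfX h)
    · exact Or.inr (ihψ X X' hfX h)
  | and φ ψ ihφ ihψ =>
    rintro ⟨h1, h2⟩
    exact ⟨ihφ X X' hfX h1, ihψ X X' hfX h2⟩
  | dknow A φ ih =>
    intro h Y hAY
    set Y' : M'.Facet := ⟨Y.1.image f, image_facet hf Y⟩
    exact ih Y Y' rfl (h Y' (hAY.trans (chiInter_sub hf X Y X' Y' hfX rfl)))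
end

section
/- If f : M → M' is a morphism between simplicial models, then the relation graph(f) = {(X, f(X)) : X ∈ F(M)} ⊆ F(M) × F(M') is a total D-simulation of M by M'. -/
/-- If `f : M → M'` is a morphism between simplicial models, then the relation
`graph(f) = {(X, f(X)) : X ∈ F(M)}` is a total D-simulation of `M` by `M'`. -/
theorem graph_is_total_D_simulation
    {Agent Atom Vertex Vertex' : Type} [Fintype Agent] [Nonempty Agent]
    [DecidableEq Vertex] [DecidableEq Vertex']
    (M : SimplicialModel Agent Atom Vertex) (M' : SimplicialModel Agent Atom Vertex')
    (f : Vertex → Vertex') (hf : SimplicialModel.IsMorphism M M' f) :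
    SimplicialModel.IsDSimulation M M'
      (fun X X' => (X'.1 : Finset Vertex') = X.1.image f) ∧
    SimplicialModel.TotalRel M M'
      (fun X X' => (X'.1 : Finset Vertex') = X.1.image f) := by
  obtain ⟨hsimp, hchi, hlab⟩ := hf
  -- the image of a facet is a facet
  have himg : ∀ X : M.Facet, X.1.image f ∈ M'.facets := by
    rintro ⟨X, hXs, hXc⟩
    have hinj : Set.InjOn f ↑X := by
      intro u hu v hv huv
      exact M.chi_injOn X hXs hu hv (by rw [← hchi u, ← hchi v, huv])
    refine ⟨hsimp X hXs, ?_⟩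
    rw [Finset.card_image_of_injOn hinj]; exact hXc
  have hlabel : ∀ X : M.Facet,
      M.flabel X = M'.flabel ⟨X.1.image f, himg X⟩ := by
    intro X
    simp only [SimplicialModel.flabel]
    ext p
    simp only [Set.mem_iUnion, Finset.mem_image]
    constructor
    · rintro ⟨v, hv, hp⟩
      exact ⟨f v, ⟨v, hv, rfl⟩, by rwa [hlab v]⟩
    · rintro ⟨w, ⟨v, hv, rfl⟩, hp⟩
      exact ⟨v, hv, by rwa [hlab v] at hp⟩
  refine ⟨⟨?_, ?_⟩, ?_⟩
  · rintro X X' (h : X'.1 = X.1.image f)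
    rw [hlabel X]
    have : X' = ⟨X.1.image f, himg X⟩ := Subtype.ext h
    rw [this]
  · rintro X X' (h : X'.1 = X.1.image f) Y
    refine ⟨⟨Y.1.image f, himg Y⟩, rfl, ?_⟩
    rintro a ⟨v, hv, rfl⟩
    rw [Finset.mem_coe, Finset.mem_inter] at hv
    refine ⟨f v, ?_, hchi v⟩
    rw [Finset.mem_coe, Finset.mem_inter, h]
    exact ⟨Finset.mem_image_of_mem f hv.1, Finset.mem_image_of_mem f hv.2⟩
  · intro X
    exact ⟨⟨X.1.image f, himg X⟩, rfl⟩
end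

section
/- Knowledge gain via D-simulation: if S ⊆ F(M) × F(M') is a D-simulation of M by M', then for every pair (X, X') ∈ S and every positive formula φ ∈ L_D^+, M', X' ⊨ φ implies M, X ⊨ φ. -/
/-- **Knowledge gain via D-simulation**: if `S` is a D-simulation of `M` by `M'`,
then for every pair `(X, X') ∈ S` and every positive formula `φ ∈ L_D⁺`,
`M', X' ⊨ φ` implies `M, X ⊨ φ`. -/
theorem knowledge_gain_via_D_simulation
    {Agent Atom Vertex Vertex' : Type} [Fintype Agent] [Nonempty Agent]
    [DecidableEq Vertex] [DecidableEq Vertex']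
    (M : SimplicialModel Agent Atom Vertex) (M' : SimplicialModel Agent Atom Vertex')
    (S : M.Facet → M'.Facet → Prop) (hS : SimplicialModel.IsDSimulation M M' S)
    (X : M.Facet) (X' : M'.Facet) (hXX' : S X X')
    (φ : PosFormulaD Agent Atom) :
    M'.satD φ X' → M.satD φ X := by
  induction φ generalizing X X' with
  | atom p => intro h; rw [SimplicialModel.satD, hS.1 X X' hXX']; exact h
  | natom p => intro h; rw [SimplicialModel.satD, hS.1 X X' hXX']; exact h
  | or φ ψ ihφ ihψ => rintro (h | h)
                      · exact Or.inl (ihφ X X' hXX' h)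
                      · exact Or.inr (ihψ X X' hXX' h)
  | and φ ψ ihφ ihψ => rintro ⟨h1, h2⟩; exact ⟨ihφ X X' hXX' h1, ihψ X X' hXX' h2⟩
  | dknow A φ ih =>
      intro h Y hAY
      obtain ⟨Y', hYY', hsub⟩ := hS.2 X X' hXX' Y
      exact ih Y Y' hYY' (h Y' (hAY.trans hsub))
end

section
/- Knowledge gain via n-simulation: let □ ∈ {K, D}. If S ⊆ F(M) × F(M') is an n-□-simulation, then for every pair (X, X') ∈ S and every positive formula φ of the corresponding language (L_K^+ or L_D^+) with deg(φ) ≤ n, M', X' ⊨ φ implies M, X ⊨ φ. -/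
/-- Modal depth of a formula of `L_K⁺`. -/
def PosFormula.deg {Agent Atom : Type} : PosFormula Agent Atom → ℕ
  | .atom _ => 0
  | .natom _ => 0
  | .or φ ψ => max φ.deg ψ.deg
  | .and φ ψ => max φ.deg ψ.deg
  | .know _ φ => φ.deg + 1

/-- Modal depth of a formula of `L_D⁺`. -/
def PosFormulaD.deg {Agent Atom : Type} : PosFormulaD Agent Atom → ℕ
  | .atom _ => 0
  | .natom _ => 0
  | .or φ ψ => max φ.deg ψ.deg
  | .and φ ψ => max φ.deg ψ.deg
  | .dknow _ φ => φ.deg + 1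

namespace SimplicialModel

variable {Agent Atom Vertex Vertex' : Type} [Fintype Agent]
  [DecidableEq Vertex] [DecidableEq Vertex']

/-- The condition (Atom): related facets carry the same labels. -/
def AtomCond (M : SimplicialModel Agent Atom Vertex) (M' : SimplicialModel Agent Atom Vertex')
    (R : M.Facet → M'.Facet → Prop) : Prop :=
  ∀ X X', R X X' → M.flabel X = M'.flabel X'

/-- `n`-K-simulations, defined by induction on `n`. -/
def IsNKSimulation (M : SimplicialModel Agent Atom Vertex)
    (M' : SimplicialModel Agent Atom Vertex') :
    ℕ → (M.Facet → M'.Facet → Prop) → Prop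
  | 0, R => AtomCond M M' R
  | n + 1, R => AtomCond M M' R ∧
      ∀ (a : Agent) X Y X', R X X' → M.indist a X Y →
        ∃ (R' : M.Facet → M'.Facet → Prop) (Y' : M'.Facet),
          IsNKSimulation M M' n R' ∧ R' Y Y' ∧ M'.indist a X' Y'

/-- `n`-D-simulations, defined by induction on `n`. -/
def IsNDSimulation (M : SimplicialModel Agent Atom Vertex)
    (M' : SimplicialModel Agent Atom Vertex') :
    ℕ → (M.Facet → M'.Facet → Prop) → Prop
  | 0, R => AtomCond M M' R
  | n + 1, R =>
      ∀ X X', R X X' → ∀ Y : M.Facet,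
        ∃ (R' : M.Facet → M'.Facet → Prop) (Y' : M'.Facet),
          IsNDSimulation M M' n R' ∧ R' Y Y' ∧ M.chiInter X Y ⊆ M'.chiInter X' Y'

/-- The operator `f^K` on relations between facets. -/
def fK (M : SimplicialModel Agent Atom Vertex) (M' : SimplicialModel Agent Atom Vertex')
    (R : M.Facet → M'.Facet → Prop) : M.Facet → M'.Facet → Prop :=
  fun X X' => ∀ (a : Agent) (Y : M.Facet), M.indist a X Y →
    ∃ Y', R Y Y' ∧ M'.indist a X' Y'

/-- The operator `f^D` on relations between facets. -/
def fD (M : SimplicialModel Agent Atom Vertex) (M' : SimplicialModel Agent Atom Vertex')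
    (R : M.Facet → M'.Facet → Prop) : M.Facet → M'.Facet → Prop :=
  fun X X' => ∀ Y : M.Facet, ∃ Y', R Y Y' ∧ M.chiInter X Y ⊆ M'.chiInter X' Y'

/-- The descending sequence `S^K_n`: `S^K_0 = {(X,X') : l(X) = l'(X')}` and
`S^K_{n+1} = S^K_0 ∩ f^K(S^K_n)`. -/
def SK (M : SimplicialModel Agent Atom Vertex) (M' : SimplicialModel Agent Atom Vertex') :
    ℕ → M.Facet → M'.Facet → Prop
  | 0 => fun X X' => M.flabel X = M'.flabel X'
  | n + 1 => fun X X' => M.flabel X = M'.flabel X' ∧ fK M M' (SK M M' n) X X'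

/-- The descending sequence `S^D_n`: `S^D_0 = {(X,X') : l(X) = l'(X')}` and
`S^D_{n+1} = f^D(S^D_n)`. -/
def SD (M : SimplicialModel Agent Atom Vertex) (M' : SimplicialModel Agent Atom Vertex') :
    ℕ → M.Facet → M'.Facet → Prop
  | 0 => fun X X' => M.flabel X = M'.flabel X'
  | n + 1 => fD M M' (SD M M' n)

end SimplicialModel

namespace SimplicialModel

variable {Agent Atom Vertex Vertex' : Type} [Fintype Agent]
  [DecidableEq Vertex] [DecidableEq Vertex']

lemma chiInter_self_eq_univ (M : SimplicialModel Agent Atom Vertex) (X : M.Facet) :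
    M.chiInter X X = Set.univ := by
  classical
  have hX : X.1 ∈ M.simplices := X.2.1
  have hcard : X.1.card = Fintype.card Agent := X.2.2
  have hinj := M.chi_injOn X.1 hX
  have himg : (X.1.image M.chi).card = Fintype.card Agent := by
    rw [Finset.card_image_of_injOn hinj, hcard]
  have : X.1.image M.chi = Finset.univ := Finset.eq_univ_of_card _ himg
  unfold chiInter
  rw [Finset.inter_self]
  ext a
  simp only [Set.mem_univ, iff_true]
  have : a ∈ X.1.image M.chi := this ▸ Finset.mem_univ a
  obtain ⟨v, hv, rfl⟩ := Finset.mem_image.mp this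
  exact ⟨v, by simpa using hv, rfl⟩

lemma facet_eq_of_univ_subset_chiInter (M : SimplicialModel Agent Atom Vertex)
    {X Y : M.Facet} (h : (Set.univ : Set Agent) ⊆ M.chiInter X Y) : X = Y := by
  classical
  have hinter : ((X.1 ∩ Y.1).image M.chi).card = Fintype.card Agent := by
    apply le_antisymm
    · calc ((X.1 ∩ Y.1).image M.chi).card ≤ (Finset.univ : Finset Agent).card :=
        Finset.card_le_card (Finset.subset_univ _)
      _ = Fintype.card Agent := Finset.card_univ
    · have : ∀ a : Agent, a ∈ (X.1 ∩ Y.1).image M.chi := by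
        intro a
        obtain ⟨v, hv, hva⟩ := h (Set.mem_univ a)
        exact Finset.mem_image.mpr ⟨v, by simpa using hv, hva⟩
      calc Fintype.card Agent = (Finset.univ : Finset Agent).card := Finset.card_univ.symm
      _ ≤ ((X.1 ∩ Y.1).image M.chi).card :=
        Finset.card_le_card (fun a _ => this a)
  have hle : Fintype.card Agent ≤ (X.1 ∩ Y.1).card :=
    hinter ▸ Finset.card_image_le
  have hXsub : X.1 ⊆ Y.1 := by
    have := Finset.eq_of_subset_of_card_le (Finset.inter_subset_left (s₂ := Y.1))
      (X.2.2 ▸ hle)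
    rw [← this]; exact Finset.inter_subset_right
  exact Subtype.ext (Finset.eq_of_subset_of_card_le hXsub (by rw [X.2.2, Y.2.2]))

lemma atomCond_of_isNKSimulation {M : SimplicialModel Agent Atom Vertex}
    {M' : SimplicialModel Agent Atom Vertex'} {n : ℕ} {R : M.Facet → M'.Facet → Prop}
    (h : IsNKSimulation M M' n R) : AtomCond M M' R := by
  cases n with
  | zero => exact h
  | succ n => exact h.1

lemma atomCond_of_isNDSimulation {M : SimplicialModel Agent Atom Vertex}
    {M' : SimplicialModel Agent Atom Vertex'} : ∀ {n : ℕ} {R : M.Facet → M'.Facet → Prop},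
    IsNDSimulation M M' n R → AtomCond M M' R := by
  intro n
  induction n with
  | zero => exact fun h => h
  | succ n ih =>
    intro R h X X' hXX'
    obtain ⟨R', Y', hR', hXY', hsub⟩ := h X X' hXX' X
    have : X' = Y' := M'.facet_eq_of_univ_subset_chiInter
      (by rw [← M.chiInter_self_eq_univ X] ; exact hsub)
    rw [this]
    exact ih hR' X Y' hXY'

end SimplicialModel

open SimplicialModel in
/-- **Knowledge gain via `n`-simulation** (for `□ ∈ {K, D}`): if `S` is an
`n`-□-simulation, then for every pair `(X, X') ∈ S` and every positive formula
`φ` of the corresponding language with `deg(φ) ≤ n`, `M', X' ⊨ φ` implies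
`M, X ⊨ φ`. -/
theorem knowledge_gain_via_n_simulation
    {Agent Atom Vertex Vertex' : Type} [Fintype Agent] [Nonempty Agent]
    [DecidableEq Vertex] [DecidableEq Vertex']
    (M : SimplicialModel Agent Atom Vertex) (M' : SimplicialModel Agent Atom Vertex') :
    (∀ (n : ℕ) (S : M.Facet → M'.Facet → Prop), IsNKSimulation M M' n S →
      ∀ X X', S X X' → ∀ φ : PosFormula Agent Atom, φ.deg ≤ n →
        M'.satK φ X' → M.satK φ X) ∧
    (∀ (n : ℕ) (S : M.Facet → M'.Facet → Prop), IsNDSimulation M M' n S →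
      ∀ X X', S X X' → ∀ φ : PosFormulaD Agent Atom, φ.deg ≤ n →
        M'.satD φ X' → M.satD φ X) := by
  constructor
  · intro n S hS X X' hXX' φ
    induction φ generalizing n S X X' with
    | atom p =>
      intro _ hsat
      rw [satK, atomCond_of_isNKSimulation hS X X' hXX']
      exact hsat
    | natom p =>
      intro _ hsat
      rw [satK, atomCond_of_isNKSimulation hS X X' hXX']
      exact hsat
    | or φ ψ ihφ ihψ =>
      intro hdeg hsat
      rcases hsat with h | h
      · exact Or.inl (ihφ n S hS X X' hXX' (le_trans (le_max_left _ _) hdeg) h)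
      · exact Or.inr (ihψ n S hS X X' hXX' (le_trans (le_max_right _ _) hdeg) h)
    | and φ ψ ihφ ihψ =>
      intro hdeg hsat
      exact ⟨ihφ n S hS X X' hXX' (le_trans (le_max_left _ _) hdeg) hsat.1,
        ihψ n S hS X X' hXX' (le_trans (le_max_right _ _) hdeg) hsat.2⟩
    | know a φ ih =>
      intro hdeg hsat Y hind
      cases n with
      | zero => simp [PosFormula.deg] at hdeg
      | succ m =>
        obtain ⟨R', Y', hR', hYY', hind'⟩ := hS.2 a X Y X' hXX' hind
        exact ih m R' hR' Y Y' hYY' (by simpa [PosFormula.deg] using hdeg) (hsat Y' hind')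
  · intro n S hS X X' hXX' φ
    induction φ generalizing n S X X' with
    | atom p =>
      intro _ hsat
      rw [satD, atomCond_of_isNDSimulation hS X X' hXX']
      exact hsat
    | natom p =>
      intro _ hsat
      rw [satD, atomCond_of_isNDSimulation hS X X' hXX']
      exact hsat
    | or φ ψ ihφ ihψ =>
      intro hdeg hsat
      rcases hsat with h | h
      · exact Or.inl (ihφ n S hS X X' hXX' (le_trans (le_max_left _ _) hdeg) h)
      · exact Or.inr (ihψ n S hS X X' hXX' (le_trans (le_max_right _ _) hdeg) h)
    | and φ ψ ihφ ihψ =>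
      intro hdeg hsat
      exact ⟨ihφ n S hS X X' hXX' (le_trans (le_max_left _ _) hdeg) hsat.1,
        ihψ n S hS X X' hXX' (le_trans (le_max_right _ _) hdeg) hsat.2⟩
    | dknow A φ ih =>
      intro hdeg hsat Y hA
      cases n with
      | zero => simp [PosFormulaD.deg] at hdeg
      | succ m =>
        obtain ⟨R', Y', hR', hYY', hsub⟩ := hS X X' hXX' Y
        exact ih m R' hR' Y Y' hYY' (by simpa [PosFormulaD.deg] using hdeg)
          (hsat Y' (hA.trans hsub))
end

section
/- Let M and M' be finite simplicial models over a finite set At of atomic propositions and □ ∈ {K, D}. If there is no total □-simulation of M by M', then there exists a positive formula φ (in L_K^+ if □ = K, in L_D^+ if □ = D) such that M ⊭ φ and M' ⊨ φ. -/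
section Aux

variable {Agent Atom Vertex : Type} [Fintype Agent] [DecidableEq Vertex]

/-- Big disjunction for `L_K⁺`, with `p ∧ ¬p` as the empty case. -/
def bigOrK (p : Atom) : List (PosFormula Agent Atom) → PosFormula Agent Atom
  | [] => .and (.atom p) (.natom p)
  | φ :: l => .or φ (bigOrK p l)

/-- Big disjunction for `L_D⁺`, with `p ∧ ¬p` as the empty case. -/
def bigOrD (p : Atom) : List (PosFormulaD Agent Atom) → PosFormulaD Agent Atom
  | [] => .and (.atom p) (.natom p)
  | φ :: l => .or φ (bigOrD p l)

lemma satK_bigOrK (M : SimplicialModel Agent Atom Vertex) (p : Atom)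
    (l : List (PosFormula Agent Atom)) (X : M.Facet) :
    M.satK (bigOrK p l) X ↔ ∃ φ ∈ l, M.satK φ X := by
  induction l with
  | nil => simp [bigOrK, SimplicialModel.satK]
  | cons φ l ih => simp [bigOrK, SimplicialModel.satK, ih]

lemma satD_bigOrD (M : SimplicialModel Agent Atom Vertex) (p : Atom)
    (l : List (PosFormulaD Agent Atom)) (X : M.Facet) :
    M.satD (bigOrD p l) X ↔ ∃ φ ∈ l, M.satD φ X := by
  induction l with
  | nil => simp [bigOrD, SimplicialModel.satD]
  | cons φ l ih => simp [bigOrD, SimplicialModel.satD, ih]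

end Aux

open SimplicialModel in
/-- Let `M` and `M'` be finite simplicial models over a finite set of atomic
propositions and `□ ∈ {K, D}`. If there is no total □-simulation of `M` by `M'`,
then there exists a positive formula `φ` (of `L_K⁺`, resp. `L_D⁺`) such that
`M ⊭ φ` and `M' ⊨ φ`. -/
theorem exists_obstruction_of_no_total_simulation
    {Agent Atom Vertex Vertex' : Type} [Fintype Agent] [Nonempty Agent]
    [DecidableEq Vertex] [DecidableEq Vertex'] [Finite Vertex] [Finite Vertex']
    [Fintype Atom] [Nonempty Atom]
    (M : SimplicialModel Agent Atom Vertex) (M' : SimplicialModel Agent Atom Vertex') :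
    ((¬ ∃ R : M.Facet → M'.Facet → Prop, IsKSimulation M M' R ∧ TotalRel M M' R) →
      ∃ φ : PosFormula Agent Atom,
        ¬ (∀ X : M.Facet, M.satK φ X) ∧ (∀ X' : M'.Facet, M'.satK φ X')) ∧
    ((¬ ∃ R : M.Facet → M'.Facet → Prop, IsDSimulation M M' R ∧ TotalRel M M' R) →
      ∃ φ : PosFormulaD Agent Atom,
        ¬ (∀ X : M.Facet, M.satD φ X) ∧ (∀ X' : M'.Facet, M'.satD φ X')) := by
  classical
  haveI : Fintype Vertex' := Fintype.ofFinite _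
  haveI : Finite M'.Facet := by unfold SimplicialModel.Facet; infer_instance
  haveI : Fintype M'.Facet := Fintype.ofFinite _
  haveI : Inhabited (PosFormula Agent Atom) := ⟨.atom (Classical.arbitrary Atom)⟩
  haveI : Inhabited (PosFormulaD Agent Atom) := ⟨.atom (Classical.arbitrary Atom)⟩
  obtain ⟨p⟩ := ‹Nonempty Atom›
  constructor
  · -- K case
    intro hno
    set R : M.Facet → M'.Facet → Prop :=
      fun X X' => ∀ φ, M'.satK φ X' → M.satK φ X with hR
    have hsim : IsKSimulation M M' R := by
      constructor
      · intro X X' h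
        ext q
        constructor
        · intro hq
          by_contra hq'
          exact (h (.natom q) hq') hq
        · intro hq
          exact h (.atom q) hq
      · intro a X Y X' h hXY
        by_contra hcon
        push_neg at hcon
        have key : ∀ Y' : M'.Facet, M'.indist a X' Y' →
            ∃ φ, M'.satK φ Y' ∧ ¬ M.satK φ Y := by
          intro Y' hY'
          by_contra hc
          push_neg at hc
          exact hcon Y' hc hY'
        choose! f hf1 hf2 using key
        set l : List (PosFormula Agent Atom) :=
          ((Finset.univ.filter (fun Y' => M'.indist a X' Y')).toList.map f) with hl
        have hbig : M'.satK (.know a (bigOrK p l)) X' := by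
          intro Y' hY'
          rw [satK_bigOrK]
          refine ⟨f Y', ?_, hf1 Y' hY'⟩
          simp only [hl, List.mem_map, Finset.mem_toList, Finset.mem_filter,
            Finset.mem_univ, true_and]
          exact ⟨Y', hY', rfl⟩
        have hX : M.satK (.know a (bigOrK p l)) X := h _ hbig
        have hY : M.satK (bigOrK p l) Y := hX Y hXY
        rw [satK_bigOrK] at hY
        obtain ⟨φ, hmem, hsat⟩ := hY
        simp only [hl, List.mem_map, Finset.mem_toList, Finset.mem_filter,
          Finset.mem_univ, true_and] at hmem
        obtain ⟨Y', hY', rfl⟩ := hmem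
        exact hf2 Y' hY' hsat
    have hnt : ¬ TotalRel M M' R := fun ht => hno ⟨R, hsim, ht⟩
    simp only [TotalRel] at hnt
    push_neg at hnt
    obtain ⟨X, hX⟩ := hnt
    have key : ∀ X' : M'.Facet, ∃ φ, M'.satK φ X' ∧ ¬ M.satK φ X := by
      intro X'
      by_contra hc
      push_neg at hc
      exact hX X' hc
    choose g hg1 hg2 using key
    refine ⟨bigOrK p ((Finset.univ : Finset M'.Facet).toList.map g), ?_, ?_⟩
    · intro hall
      have := hall X
      rw [satK_bigOrK] at this
      obtain ⟨φ, hmem, hsat⟩ := this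
      simp only [List.mem_map, Finset.mem_toList, Finset.mem_univ, true_and] at hmem
      obtain ⟨X', rfl⟩ := hmem
      exact hg2 X' hsat
    · intro X'
      rw [satK_bigOrK]
      exact ⟨g X', by simp, hg1 X'⟩
  · -- D case
    intro hno
    set R : M.Facet → M'.Facet → Prop :=
      fun X X' => ∀ φ, M'.satD φ X' → M.satD φ X with hR
    have hsim : IsDSimulation M M' R := by
      constructor
      · intro X X' h
        ext q
        constructor
        · intro hq
          by_contra hq'
          exact (h (.natom q) hq') hq
        · intro hq
          exact h (.atom q) hq
      · intro X X' h Y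
        by_contra hcon
        push_neg at hcon
        have key : ∀ Y' : M'.Facet, M.chiInter X Y ⊆ M'.chiInter X' Y' →
            ∃ φ, M'.satD φ Y' ∧ ¬ M.satD φ Y := by
          intro Y' hY'
          by_contra hc
          push_neg at hc
          exact hcon Y' hc hY'
        choose! f hf1 hf2 using key
        set l : List (PosFormulaD Agent Atom) :=
          ((Finset.univ.filter
            (fun Y' => M.chiInter X Y ⊆ M'.chiInter X' Y')).toList.map f) with hl
        have hbig : M'.satD (.dknow (M.chiInter X Y) (bigOrD p l)) X' := by
          intro Y' hY'
          rw [satD_bigOrD]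
          refine ⟨f Y', ?_, hf1 Y' hY'⟩
          simp only [hl, List.mem_map, Finset.mem_toList, Finset.mem_filter,
            Finset.mem_univ, true_and]
          exact ⟨Y', hY', rfl⟩
        have hX : M.satD (.dknow (M.chiInter X Y) (bigOrD p l)) X := h _ hbig
        have hY : M.satD (bigOrD p l) Y := hX Y subset_rfl
        rw [satD_bigOrD] at hY
        obtain ⟨φ, hmem, hsat⟩ := hY
        simp only [hl, List.mem_map, Finset.mem_toList, Finset.mem_filter,
          Finset.mem_univ, true_and] at hmem
        obtain ⟨Y', hY', rfl⟩ := hmem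
        exact hf2 Y' hY' hsat
    have hnt : ¬ TotalRel M M' R := fun ht => hno ⟨R, hsim, ht⟩
    simp only [TotalRel] at hnt
    push_neg at hnt
    obtain ⟨X, hX⟩ := hnt
    have key : ∀ X' : M'.Facet, ∃ φ, M'.satD φ X' ∧ ¬ M.satD φ X := by
      intro X'
      by_contra hc
      push_neg at hc
      exact hX X' hc
    choose g hg1 hg2 using key
    refine ⟨bigOrD p ((Finset.univ : Finset M'.Facet).toList.map g), ?_, ?_⟩
    · intro hall
      have := hall X
      rw [satD_bigOrD] at this
      obtain ⟨φ, hmem, hsat⟩ := this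
      simp only [List.mem_map, Finset.mem_toList, Finset.mem_univ, true_and] at hmem
      obtain ⟨X', rfl⟩ := hmem
      exact hg2 X' hsat
    · intro X'
      rw [satD_bigOrD]
      exact ⟨g X', by simp, hg1 X'⟩
end
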